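/- arXiv:2509.15149 — 4 statements merged into one kernel-verified Lean document; each statement's English description precedes it below -/
import Mathlib

section
/- If (Y,d) is a uniformly perfect metric space with constant c ∈ (0,1), then for every nonempty subset F ⊆ Y and every M > 0 with diam(F) < M < M/c < diam(Y), there exists a set L ⊆ Y with F ⊆ L and M ≤ diam(L) ≤ 2M/c. -/
open Metric Set

/-
Take `y ∈ F` and apply uniform perfectness at `y` with radius `M / c`: this gives `y'` with
`M ≤ d(y, y') < M / c`. Then `L = F ∪ {y'}` has diameter at least `d(y, y') ≥ M` and at most
`d(y', y) + diam F ≤ M / c + M ≤ 2M / c`.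
-/

section DiamInsert

variable {X : Type*} [PseudoMetricSpace X] {s : Set X} {x y : X}

theorem Metric.diam_insert_le (hy : y ∈ s) : diam (insert x s) ≤ dist x y + diam s := by
  rw [insert_eq]
  simpa only [diam_singleton, zero_add] using diam_union (mem_singleton x) hy

theorem Metric.dist_le_diam_insert (hs : Bornology.IsBounded s) (hy : y ∈ s) :
    dist x y ≤ diam (insert x s) :=
  dist_le_diam_of_mem (hs.insert x) (mem_insert x s) (mem_insert_of_mem x hy)

end DiamInsert

/-- In a `c`-uniformly perfect metric space `Y`, any nonempty set `F` with
`diam F < M < M/c < diam Y` is contained in a set `L` with `M ≤ diam L ≤ 2M/c`. -/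
theorem stmt0 {Y : Type*} [MetricSpace Y] (c : ℝ) (hc : c ∈ Set.Ioo (0:ℝ) 1)
    (hup : ∀ (y : Y) (r : ℝ), 0 < r → ENNReal.ofReal r < EMetric.diam (Set.univ : Set Y) →
      ∃ y', y' ∈ ball y r ∧ y' ∉ ball y (c * r))
    (F : Set Y) (hF : F.Nonempty) (M : ℝ) (hM : 0 < M)
    (hdF : EMetric.diam F < ENNReal.ofReal M)
    (hMY : ENNReal.ofReal (M / c) < EMetric.diam (Set.univ : Set Y)) :
    ∃ L : Set Y, F ⊆ L ∧ Bornology.IsBounded L ∧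
      M ≤ Metric.diam L ∧ Metric.diam L ≤ 2 * M / c := by
  obtain ⟨hc0, hc1⟩ := hc
  obtain ⟨y, hy⟩ := hF
  obtain ⟨y', hy'_near, hy'_far⟩ := hup y (M / c) (div_pos hM hc0) hMY
  rw [mul_div_cancel₀ M hc0.ne', mem_ball, not_lt] at hy'_far
  have hFb : Bornology.IsBounded F := isBounded_iff_ediam_ne_top.2 hdF.ne_top
  have hdiamF : diam F ≤ M := ENNReal.toReal_le_of_le_ofReal hM.le hdF.le
  have hM_le : M ≤ M / c := le_div_self hM.le hc0 hc1.le
  refine ⟨insert y' F, subset_insert y' F, hFb.insert y', ?_, ?_⟩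
  · exact hy'_far.trans (dist_le_diam_insert hFb hy)
  · calc diam (insert y' F) ≤ dist y' y + diam F := diam_insert_le hy
      _ ≤ M / c + M / c := add_le_add (mem_ball.1 hy'_near).le (hdiamF.trans hM_le)
      _ = 2 * M / c := by ring
end

section
/- Let (X,d,μ) be a metric measure space, σ ∈ (1,∞), and B₀ = B(z₀,R₀) a ball. Suppose μ satisfies: μ(B(x,r)) ≥ b r^Q whenever B(x,r) ⊆ σB₀ and r ≤ σR₀, for some constants b,Q > 0. Let g be measurable on σB₀ with ∫_{σB₀} g^p dμ < ∞, E_k := {x ∈ σB₀ : g(x) ≤ 2^k}, and let k₀ be the least integer with 2^{k₀} ≥ [2^{1/Q}/((σ−1)(1−2^{−p/Q}))]^{Q/p} (b R₀^Q)^{−1/p} (∫_{σB₀} g^p dμ)^{1/p}. Then μ(E_{k₀}) ≥ μ(σB₀)/2. -/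
/-!
Chebyshev's inequality bounds `μ(σB₀ \ E_{k₀})` by `2^{-k₀p} ∫_{σB₀} g^p dμ`, and the choice of `k₀`
makes this at most `b ρ^Q / 2` for `ρ = (σ-1)(1-2^{-p/Q}) R₀ < σR₀`. The volume lower bound on
`B(z₀, ρ) ⊆ σB₀` gives `b ρ^Q ≤ μ(σB₀)`, so `E_{k₀}` carries at least half of `μ(σB₀)`.
-/

open Metric Set MeasureTheory

theorem measure_sep_le_ofReal_setIntegral_div {α : Type*} [MeasurableSpace α] {μ : Measure α}
    {s : Set α} {h : α → ℝ} (h0 : ∀ x, 0 ≤ h x) (hint : IntegrableOn h s μ) {ε : ℝ} (hε : 0 < ε) :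
    μ {x ∈ s | ε ≤ h x} ≤ ENNReal.ofReal ((∫ x in s, h x ∂μ) / ε) := by
  calc μ {x ∈ s | ε ≤ h x}
      ≤ μ.restrict s {x | ENNReal.ofReal ε ≤ ENNReal.ofReal (h x)} :=
        (measure_mono (t := {x | ENNReal.ofReal ε ≤ ENNReal.ofReal (h x)} ∩ s)
          fun x hx => ⟨ENNReal.ofReal_le_ofReal hx.2, hx.1⟩).trans (Measure.le_restrict_apply _ _)
    _ ≤ (∫⁻ x in s, ENNReal.ofReal (h x) ∂μ) / ENNReal.ofReal ε :=
        meas_ge_le_lintegral_div hint.aemeasurable.ennreal_ofReal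
          (ENNReal.ofReal_pos.2 hε).ne' ENNReal.ofReal_ne_top
    _ = ENNReal.ofReal ((∫ x in s, h x ∂μ) / ε) := by
        rw [← ofReal_integral_eq_lintegral_ofReal hint (ae_of_all _ h0),
          ENNReal.ofReal_div_of_pos hε]

theorem ENNReal.half_le_of_le_add_of_le_half {a b c : ENNReal} (habc : a ≤ b + c)
    (hc : c ≤ a / 2) (hc_top : c ≠ ⊤) : a / 2 ≤ b := by
  have : a / 2 ≤ a - c := ENNReal.le_sub_of_add_le_left hc_top <| by
    calc c + a / 2 ≤ a / 2 + a / 2 := by gcongr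
      _ = a := ENNReal.add_halves a
  exact this.trans (tsub_le_iff_right.2 habc)

theorem measure_inter_ge_half_of_measure_diff_le_half {α : Type*} [MeasurableSpace α]
    {μ : Measure α} {s t : Set α} (h : μ (s \ t) ≤ μ s / 2) (hfin : μ (s \ t) ≠ ⊤) :
    μ s / 2 ≤ μ (s ∩ t) := by
  refine ENNReal.half_le_of_le_add_of_le_half ?_ h hfin
  calc μ s = μ ((s ∩ t) ∪ (s \ t)) := by rw [inter_union_sdiff]
    _ ≤ μ (s ∩ t) + μ (s \ t) := measure_union_le _ _

theorem div_rpow_le_of_threshold_le {I b R D Q p t : ℝ} (hI : 0 ≤ I) (hb : 0 < b) (hR : 0 < R)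
    (hD : 0 < D) (hQ : 0 < Q) (hp : 0 < p) (ht : 0 < t)
    (h : ((2 : ℝ) ^ (1 / Q) / D) ^ (Q / p) * (b * R ^ Q) ^ (-(1 : ℝ) / p) * I ^ (1 / p) ≤ t) :
    I / t ^ p ≤ b * (D * R) ^ Q / 2 := by
  have hc : 0 < b * R ^ Q := by positivity
  -- the `p`-th power of `h` reads `2 / D ^ Q * (b * R ^ Q)⁻¹ * I ≤ t ^ p`
  have hpow := Real.rpow_le_rpow (by positivity) h hp.le
  rw [Real.mul_rpow (by positivity) (by positivity), Real.mul_rpow (by positivity) (by positivity),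
    ← Real.rpow_mul (by positivity), ← Real.rpow_mul hc.le, ← Real.rpow_mul hI,
    div_mul_cancel₀ Q hp.ne', div_mul_cancel₀ (-(1:ℝ)) hp.ne', div_mul_cancel₀ (1:ℝ) hp.ne',
    Real.rpow_one, Real.div_rpow (by positivity) hD.le, ← Real.rpow_mul zero_le_two,
    div_mul_cancel₀ (1:ℝ) hQ.ne', Real.rpow_one, Real.rpow_neg_one] at hpow
  have htp : 0 < t ^ p := by positivity
  rw [div_le_iff₀ htp, Real.mul_rpow hD.le hR.le]
  calc I = 2 / D ^ Q * (b * R ^ Q)⁻¹ * I * (b * (D ^ Q * R ^ Q) / 2) := by field_simp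
    _ ≤ t ^ p * (b * (D ^ Q * R ^ Q) / 2) := by gcongr
    _ = b * (D ^ Q * R ^ Q) / 2 * t ^ p := mul_comm _ _

theorem stmt6_general {X : Type*} [MetricSpace X] [MeasurableSpace X]
    (μ : Measure X) (σ R₀ b Q p : ℝ)
    (hσ : 1 < σ) (hR₀ : 0 < R₀) (hb : 0 < b) (hQ : 0 < Q) (hp : 0 < p)
    (z₀ : X)
    (hV : ∀ (x : X) (r : ℝ), 0 < r → r ≤ σ * R₀ → ball x r ⊆ ball z₀ (σ * R₀) →
      ENNReal.ofReal (b * r ^ Q) ≤ μ (ball x r))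
    (g : X → ℝ) (hg0 : ∀ x, 0 ≤ g x)
    (hint : IntegrableOn (fun x => g x ^ p) (ball z₀ (σ * R₀)) μ)
    (k₀ : ℤ)
    (hk₀ : ((2 : ℝ) ^ (1 / Q) / ((σ - 1) * (1 - 2 ^ (-p / Q)))) ^ (Q / p) *
        (b * R₀ ^ Q) ^ (-(1 : ℝ) / p) *
        (∫ x in ball z₀ (σ * R₀), g x ^ p ∂μ) ^ (1 / p) ≤ (2 : ℝ) ^ (k₀ : ℝ)) :
    μ (ball z₀ (σ * R₀)) / 2 ≤ μ {x ∈ ball z₀ (σ * R₀) | g x ≤ (2 : ℝ) ^ (k₀ : ℝ)} := by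
  set B := ball z₀ (σ * R₀)
  set t : ℝ := 2 ^ (k₀ : ℝ)
  set D := (σ - 1) * (1 - 2 ^ (-p / Q))
  have ht : 0 < t := by positivity
  have h2_rpow : (2 : ℝ) ^ (-p / Q) < 1 :=
    Real.rpow_lt_one_of_one_lt_of_neg one_lt_two (div_neg_of_neg_of_pos (neg_neg_of_pos hp) hQ)
  have hD : 0 < D := mul_pos (by linarith) (by linarith)
  have hρ : D * R₀ ≤ σ * R₀ := by
    have hDσ : D ≤ σ := by nlinarith [Real.rpow_pos_of_pos two_pos (-p / Q)]
    gcongr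
  have hcheb : μ (B \ {x | g x ≤ t}) ≤ ENNReal.ofReal (b * (D * R₀) ^ Q / 2) := calc
    μ (B \ {x | g x ≤ t}) ≤ μ {x ∈ B | t ^ p ≤ g x ^ p} :=
      measure_mono fun x hx => ⟨hx.1, Real.rpow_le_rpow ht.le (not_le.1 hx.2).le hp.le⟩
    _ ≤ ENNReal.ofReal ((∫ x in B, g x ^ p ∂μ) / t ^ p) :=
      measure_sep_le_ofReal_setIntegral_div (fun x => Real.rpow_nonneg (hg0 x) p) hint (by positivity)
    _ ≤ ENNReal.ofReal (b * (D * R₀) ^ Q / 2) := ENNReal.ofReal_le_ofReal <|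
      div_rpow_le_of_threshold_le (integral_nonneg fun x => Real.rpow_nonneg (hg0 x) p)
        hb hR₀ hD hQ hp ht hk₀
  have hball : ENNReal.ofReal (b * (D * R₀) ^ Q) ≤ μ B :=
    (hV z₀ _ (by positivity) hρ (ball_subset_ball hρ)).trans (measure_mono (ball_subset_ball hρ))
  refine measure_inter_ge_half_of_measure_diff_le_half (hcheb.trans ?_)
    (hcheb.trans_lt ENNReal.ofReal_lt_top).ne
  rw [ENNReal.ofReal_div_of_pos two_pos, ENNReal.ofReal_ofNat]
  gcongr

/-- Under the `V(σB₀,Q,b)` measure lower bound, if `k₀` is the least integer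
with `2^{k₀} ≥ [2^{1/Q}/((σ−1)(1−2^{−p/Q}))]^{Q/p} (bR₀^Q)^{−1/p} (∫_{σB₀} g^p)^{1/p}`,
then `μ(E_{k₀}) ≥ μ(σB₀)/2`, where `E_k = {x ∈ σB₀ : g x ≤ 2^k}`. -/
theorem stmt6 {X : Type*} [MetricSpace X] [MeasurableSpace X] [OpensMeasurableSpace X]
    (μ : Measure X) (σ R₀ b Q p : ℝ)
    (hσ : 1 < σ) (hR₀ : 0 < R₀) (hb : 0 < b) (hQ : 0 < Q) (hp : 0 < p)
    (z₀ : X)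
    (hV : ∀ (x : X) (r : ℝ), 0 < r → r ≤ σ * R₀ → ball x r ⊆ ball z₀ (σ * R₀) →
      ENNReal.ofReal (b * r ^ Q) ≤ μ (ball x r))
    (hfin : μ (ball z₀ (σ * R₀)) < ⊤)
    (g : X → ℝ) (hg : Measurable g) (hg0 : ∀ x, 0 ≤ g x)
    (hint : IntegrableOn (fun x => g x ^ p) (ball z₀ (σ * R₀)) μ)
    (k₀ : ℤ)
    (hk₀ : ((2 : ℝ) ^ (1 / Q) / ((σ - 1) * (1 - 2 ^ (-p / Q)))) ^ (Q / p) *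
        (b * R₀ ^ Q) ^ (-(1 : ℝ) / p) *
        (∫ x in ball z₀ (σ * R₀), g x ^ p ∂μ) ^ (1 / p) ≤ (2 : ℝ) ^ (k₀ : ℝ))
    (hk₀least : ∀ k : ℤ,
      ((2 : ℝ) ^ (1 / Q) / ((σ - 1) * (1 - 2 ^ (-p / Q)))) ^ (Q / p) *
        (b * R₀ ^ Q) ^ (-(1 : ℝ) / p) *
        (∫ x in ball z₀ (σ * R₀), g x ^ p ∂μ) ^ (1 / p) ≤ (2 : ℝ) ^ (k : ℝ) → k₀ ≤ k) :
    μ (ball z₀ (σ * R₀)) / 2 ≤ μ {x ∈ ball z₀ (σ * R₀) | g x ≤ (2 : ℝ) ^ (k₀ : ℝ)} :=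
  stmt6_general μ σ R₀ b Q p hσ hR₀ hb hQ hp z₀ hV g hg0 hint k₀ hk₀
end

section
/- Let (X,d,μ) be a metric measure space, (Y,d_Y) a metric space, σ ∈ (1,∞), B₀ ⊆ X a ball of radius R₀, and suppose μ satisfies μ(B(x,r)) ≥ b r^Q whenever B(x,r) ⊆ σB₀ with r ≤ σR₀, for constants Q,b > 0. Let s,p ∈ (0,∞) with p > Q/s, and let u : σB₀ → Y be measurable admitting a function g ∈ L^p(σB₀), g ≥ 0, such that d_Y(u(x),u(y)) ≤ d(x,y)^s (g(x)+g(y)) for almost every x,y ∈ σB₀. Then there exists a set N with μ(N)=0 and a constant C depending only on s,p,Q,σ such that d_Y(u(x),u(y)) ≤ C b^{−1/p} d(x,y)^{s−Q/p} ‖g‖_{L^p(σB₀)} for all x,y ∈ B₀ \ N. -/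
/-!
For `x ∈ B₀` and the dyadic radii `rⱼ = ρ 2⁻ʲ`, the measure lower bound and Chebyshev's inequality
give a point `zⱼ ∈ B(x, rⱼ)` off the exceptional set with `g zⱼ ≤ J rⱼ^(-Q/p)`, where
`J = (2 ‖g‖ₚᵖ / b)^(1/p)`. The gradient inequality then bounds `d_Y(u zⱼ, u zⱼ₊₁)` by a multiple of
`J ρ^(s-Q/p) 2^(-j(s-Q/p))`, a geometric series since `s > Q/p`, while `u zⱼ → u x`. Taking
`ρ` proportional to `d(x, y)` and joining the chains at `x` and `y` by one more application of the
gradient inequality gives the estimate.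
-/

open Metric Set MeasureTheory Filter Topology

section Selection

variable {X : Type*} [MeasurableSpace X] {μ : Measure X}

theorem exists_mem_notMem_le_two_mul_setIntegral_div {f : X → ℝ} {S B N : Set X} {m : ℝ}
    (hf : IntegrableOn f S μ) (hf0 : 0 ≤ᵐ[μ.restrict S] f) (hBS : B ⊆ S) (hm : 0 < m)
    (hμB : ENNReal.ofReal m ≤ μ B) (hN : μ N = 0) :
    ∃ z ∈ B, z ∉ N ∧ f z ≤ 2 * (∫ x in S, f x ∂μ) / m := by
  set t := 2 * (∫ x in S, f x ∂μ) / m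
  -- The factor 2 makes Chebyshev's bound `μ {t < f} ≤ m / 2` strictly smaller than `μ B`.
  suffices hsmall : μ.restrict S {z | t < f z} < ENNReal.ofReal m by
    by_contra! hbig
    have hB : B ⊆ N ∪ {z | t < f z} ∩ S := fun z hz =>
      or_iff_not_imp_left.2 fun hzN => ⟨hbig z hz hzN, hBS hz⟩
    have hμB' : μ B ≤ μ.restrict S {z | t < f z} := by
      calc μ B ≤ μ N + μ ({z | t < f z} ∩ S) := (measure_mono hB).trans (measure_union_le _ _)
        _ ≤ μ.restrict S {z | t < f z} := by rw [hN, zero_add]; exact Measure.le_restrict_apply _ _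
    exact (hsmall.trans_le (hμB.trans hμB')).false
  rcases (setIntegral_nonneg_of_ae_restrict hf0).eq_or_lt with hI | hI
  · have hf_zero : f =ᵐ[μ.restrict S] 0 := (setIntegral_eq_zero_iff_of_nonneg_ae hf0 hf).1 hI.symm
    have ht : t = 0 := by simp only [t, ← hI, mul_zero, zero_div]
    have hnull : μ.restrict S {z | t < f z} = 0 :=
      measure_mono_null (fun z (hz : t < f z) => by simp only [ht] at hz; exact hz.ne') hf_zero
    rw [hnull]
    exact ENNReal.ofReal_pos.2 hm
  · have ht : 0 < t := by positivity
    calc μ.restrict S {z | t < f z}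
        ≤ μ.restrict S {z | ENNReal.ofReal t ≤ ENNReal.ofReal (f z)} :=
          measure_mono fun z (hz : t < f z) => ENNReal.ofReal_le_ofReal hz.le
      _ ≤ (∫⁻ z in S, ENNReal.ofReal (f z) ∂μ) / ENNReal.ofReal t :=
          meas_ge_le_lintegral_div hf.aemeasurable.ennreal_ofReal
            (ENNReal.ofReal_pos.2 ht).ne' ENNReal.ofReal_ne_top
      _ = ENNReal.ofReal (m / 2) := by
          rw [← ofReal_integral_eq_lintegral_ofReal hf hf0, ← ENNReal.ofReal_div_of_pos ht]
          congr 1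
          simp only [t]
          field_simp
      _ < ENNReal.ofReal m := (ENNReal.ofReal_lt_ofReal_iff hm).2 (by linarith)

theorem exists_mem_le_mul_rpow_neg_of_ofReal_le_measure {g : X → ℝ} {p Q b r : ℝ}
    {S B N : Set X} (hp : 0 < p) (hb : 0 < b) (hr : 0 < r) (hg0 : ∀ x, 0 ≤ g x)
    (hint : IntegrableOn (fun x => g x ^ p) S μ)
    (hBS : B ⊆ S) (hμB : ENNReal.ofReal (b * r ^ Q) ≤ μ B) (hN : μ N = 0) :
    ∃ z ∈ B ∩ (S \ N), g z ≤ (2 * (∫ x in S, g x ^ p ∂μ) / b) ^ (1 / p) * r ^ (-(Q / p)) := by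
  have hbr : 0 < b * r ^ Q := by positivity
  obtain ⟨z, hzB, hzN, hz⟩ := exists_mem_notMem_le_two_mul_setIntegral_div hint
    (ae_of_all _ fun x => Real.rpow_nonneg (hg0 x) p) hBS hbr hμB hN
  refine ⟨z, ⟨hzB, hBS hzB, hzN⟩, ?_⟩
  have hI : 0 ≤ ∫ x in S, g x ^ p ∂μ := setIntegral_nonneg_of_ae_restrict
    (ae_of_all _ fun x => Real.rpow_nonneg (hg0 x) p)
  calc g z = (g z ^ p) ^ (1 / p) := by
        rw [← Real.rpow_mul (hg0 z), mul_one_div_cancel hp.ne', Real.rpow_one]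
    _ ≤ (2 * (∫ x in S, g x ^ p ∂μ) / (b * r ^ Q)) ^ (1 / p) := by
        gcongr
        exact Real.rpow_nonneg (hg0 z) p
    _ = _ := by
        rw [← div_div, div_eq_mul_inv _ (r ^ Q), Real.mul_rpow (by positivity) (by positivity),
          ← Real.rpow_neg (by positivity), ← Real.rpow_mul hr.le, neg_mul, mul_one_div]

end Selection

theorem rpow_mul_inv_two_pow {ρ : ℝ} (hρ : 0 ≤ ρ) (e : ℝ) (j : ℕ) :
    (ρ * 2⁻¹ ^ j) ^ e = ρ ^ e * (2⁻¹ ^ e) ^ j := by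
  rw [Real.mul_rpow hρ (by positivity), Real.rpow_pow_comm (by norm_num)]

section Chain

variable {X Y : Type*} [PseudoMetricSpace X] [PseudoMetricSpace Y]

def IsHajlaszGradientOn (u : X → Y) (g : X → ℝ) (s : ℝ) (A : Set X) : Prop :=
  ∀ x ∈ A, ∀ y ∈ A, dist (u x) (u y) ≤ dist x y ^ s * (g x + g y)

noncomputable def dyadicChainConst (s α : ℝ) : ℝ :=
  2 ^ s * (1 + 2 ^ α) / (1 - 2⁻¹ ^ (s - α))

theorem exists_mem_ball_dist_le_dyadicChainConst {u : X → Y} {g : X → ℝ} {s α J ρ : ℝ}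
    {A : Set X} {x : X} (hs : 0 < s) (hα : α < s) (hρ : 0 < ρ) (hg0 : ∀ z, 0 ≤ g z)
    (hu : IsHajlaszGradientOn u g s A) (hx : x ∈ A)
    (hgood : ∀ r, 0 < r → r ≤ ρ → ∃ z ∈ ball x r ∩ A, g z ≤ J * r ^ (-α)) :
    ∃ z ∈ ball x ρ ∩ A, g z ≤ J * ρ ^ (-α) ∧
      dist (u x) (u z) ≤ dyadicChainConst s α * J * ρ ^ (s - α) := by
  set r : ℕ → ℝ := fun j => ρ * 2⁻¹ ^ j with hr_def
  have hr_pos : ∀ j, 0 < r j := fun j => by positivity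
  have hr_le : ∀ j, r j ≤ ρ := fun j =>
    mul_le_of_le_one_right hρ.le (pow_le_one₀ (by norm_num) (by norm_num))
  have hr_succ : ∀ j, r (j + 1) = r j * 2⁻¹ := fun j => by
    simp only [hr_def, pow_succ, mul_assoc]
  choose z hz hgz using fun j => hgood (r j) (hr_pos j) (hr_le j)
  have hrpow : ∀ j, r j ^ s * r j ^ (-α) = ρ ^ (s - α) * (2⁻¹ ^ (s - α)) ^ j := fun j => by
    rw [← Real.rpow_add (hr_pos j), ← sub_eq_add_neg, rpow_mul_inv_two_pow hρ.le]
  have hstep : ∀ j, dist (u (z j)) (u (z (j + 1))) ≤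
      2 ^ s * (1 + 2 ^ α) * J * ρ ^ (s - α) * (2⁻¹ ^ (s - α)) ^ j := by
    intro j
    have hdist : dist (z j) (z (j + 1)) ≤ 2 * r j := by
      have h1 := mem_ball.1 (hz j).1
      have h2 := mem_ball'.1 (hz (j + 1)).1
      linarith [dist_triangle (z j) x (z (j + 1)), hr_pos j, hr_succ j]
    have hnext : r (j + 1) ^ (-α) = 2 ^ α * r j ^ (-α) := by
      rw [hr_succ, Real.mul_rpow (hr_pos j).le (by norm_num), Real.inv_rpow (by norm_num),
        ← Real.rpow_neg (by norm_num), neg_neg, mul_comm]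
    calc dist (u (z j)) (u (z (j + 1)))
        ≤ dist (z j) (z (j + 1)) ^ s * (g (z j) + g (z (j + 1))) := hu _ (hz j).2 _ (hz (j + 1)).2
      _ ≤ (2 * r j) ^ s * (J * r j ^ (-α) + J * r (j + 1) ^ (-α)) := by
          gcongr
          · exact add_nonneg (hg0 _) (hg0 _)
          · exact hgz j
          · exact hgz (j + 1)
      _ = 2 ^ s * (1 + 2 ^ α) * J * (r j ^ s * r j ^ (-α)) := by
          rw [hnext, Real.mul_rpow (by norm_num) (hr_pos j).le]; ring
      _ = _ := by rw [hrpow]; ring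
  have hr_tendsto : Tendsto r atTop (𝓝 0) := by
    simpa only [mul_zero] using (tendsto_pow_atTop_nhds_zero_of_lt_one (r := (2⁻¹ : ℝ))
      (by norm_num) (by norm_num)).const_mul ρ
  have hlim : Tendsto (fun j => u (z j)) atTop (𝓝 (u x)) := by
    rw [tendsto_iff_dist_tendsto_zero]
    refine squeeze_zero (fun _ => dist_nonneg) (fun j => ?_)
      (g := fun j => J * r j ^ (s - α) + g x * r j ^ s) ?_
    · calc dist (u (z j)) (u x)
          ≤ dist (z j) x ^ s * (g (z j) + g x) := hu _ (hz j).2 _ hx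
        _ ≤ r j ^ s * (J * r j ^ (-α) + g x) := by
            gcongr
            · exact add_nonneg (hg0 _) (hg0 _)
            · exact (mem_ball.1 (hz j).1).le
            · exact hgz j
        _ = _ := by rw [sub_eq_add_neg, Real.rpow_add (hr_pos j)]; ring
    · simpa using ((hr_tendsto.rpow_const_nhds_zero (sub_pos.2 hα)).const_mul J).add
        ((hr_tendsto.rpow_const_nhds_zero hs).const_mul (g x))
  refine ⟨z 0, ?_, ?_, ?_⟩
  · simpa [hr_def] using hz 0
  · simpa [hr_def] using hgz 0
  · rw [dist_comm]
    refine (dist_le_of_le_geometric_of_tendsto₀ _ _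
      (Real.rpow_lt_one (by norm_num) (by norm_num) (sub_pos.2 hα)) hstep hlim).trans_eq ?_
    rw [dyadicChainConst]
    ring

noncomputable def morreyConst (s α σ : ℝ) : ℝ :=
  2 * σ ^ s * ((σ - 1) / 2) ^ (-α) + 2 * dyadicChainConst s α * ((σ - 1) / 2) ^ (s - α)

theorem morreyConst_pos {s α σ : ℝ} (hα : α < s) (hσ : 1 < σ) : 0 < morreyConst s α σ := by
  have hθ : (2⁻¹ : ℝ) ^ (s - α) < 1 := Real.rpow_lt_one (by norm_num) (by norm_num) (sub_pos.2 hα)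
  have hσ' : 0 < (σ - 1) / 2 := by linarith
  have : 0 < dyadicChainConst s α := div_pos (by positivity) (sub_pos.2 hθ)
  unfold morreyConst
  positivity

theorem dist_le_morreyConst_mul {u : X → Y} {g : X → ℝ} {s α J σ : ℝ} {A : Set X} {x y : X}
    (hs : 0 < s) (hα : α < s) (hσ : 1 < σ) (hg0 : ∀ z, 0 ≤ g z)
    (hu : IsHajlaszGradientOn u g s A) (hx : x ∈ A) (hy : y ∈ A)
    (hgood : ∀ c ∈ ({x, y} : Set X), ∀ r, 0 < r → r ≤ (σ - 1) / 2 * dist x y →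
      ∃ z ∈ ball c r ∩ A, g z ≤ J * r ^ (-α)) :
    dist (u x) (u y) ≤ morreyConst s α σ * J * dist x y ^ (s - α) := by
  rcases (dist_nonneg : 0 ≤ dist x y).eq_or_lt with hd | hd
  · have := hu x hx y hy
    rw [← hd, Real.zero_rpow hs.ne', zero_mul] at this
    rw [← hd, Real.zero_rpow (sub_pos.2 hα).ne', mul_zero]
    exact this
  set d := dist x y
  set ρ := (σ - 1) / 2 * d with hρ_def
  have hρ : 0 < ρ := mul_pos (by linarith) hd
  obtain ⟨zx, hzx, hgzx, hux⟩ := exists_mem_ball_dist_le_dyadicChainConst hs hα hρ hg0 hu hx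
    (hgood x (by simp))
  obtain ⟨zy, hzy, hgzy, huy⟩ := exists_mem_ball_dist_le_dyadicChainConst hs hα hρ hg0 hu hy
    (hgood y (by simp))
  have hzz : dist zx zy ≤ σ * d := by
    linarith [dist_triangle4 zx x y zy, mem_ball.1 hzx.1, mem_ball'.1 hzy.1]
  have hmid : dist (u zx) (u zy) ≤ (σ * d) ^ s * (2 * (J * ρ ^ (-α))) :=
    calc dist (u zx) (u zy) ≤ dist zx zy ^ s * (g zx + g zy) := hu _ hzx.2 _ hzy.2
      _ ≤ (σ * d) ^ s * (2 * (J * ρ ^ (-α))) := by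
          gcongr
          · exact add_nonneg (hg0 _) (hg0 _)
          · linarith
  calc dist (u x) (u y) ≤ dist (u x) (u zx) + dist (u zx) (u zy) + dist (u y) (u zy) := by
        rw [dist_comm (u y)]; exact dist_triangle4 _ _ _ _
    _ ≤ dyadicChainConst s α * J * ρ ^ (s - α) + (σ * d) ^ s * (2 * (J * ρ ^ (-α)))
        + dyadicChainConst s α * J * ρ ^ (s - α) := by gcongr
    _ = morreyConst s α σ * J * d ^ (s - α) := by
        rw [Real.mul_rpow (by linarith) hd.le, hρ_def, Real.mul_rpow (by linarith) hd.le,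
          Real.mul_rpow (by linarith) hd.le, Real.rpow_sub hd, Real.rpow_neg hd.le, morreyConst]
        ring

end Chain

/-- Morrey embedding for fractional Hajłasz–Sobolev maps: under the
`V(σB₀,Q,b)` condition and `p > Q/s`, any measurable `u` with an `s`-gradient
`g ∈ L^p(σB₀)` satisfies, off a null set `N`,
`d_Y(u x, u y) ≤ C b^{-1/p} d(x,y)^{s-Q/p} ‖g‖_{L^p(σB₀)}` on `B₀ \ N`,
with `C` depending only on `s, p, Q, σ`. -/
theorem stmt7 (s p Q σ : ℝ) (hs : 0 < s) (hQ : 0 < Q) (hσ : 1 < σ) (hp : Q / s < p) :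
    ∃ C : ℝ, 0 < C ∧
      ∀ (X : Type) (_ : MetricSpace X) (_ : MeasurableSpace X),
        ∀ (_ : OpensMeasurableSpace X) (μ : Measure X)
          (Y : Type) (_ : MetricSpace Y) (_ : MeasurableSpace Y),
        ∀ (_ : BorelSpace Y) (z₀ : X) (R₀ b : ℝ), 0 < R₀ → 0 < b →
        (∀ (x : X) (r : ℝ), 0 < r → r ≤ σ * R₀ → ball x r ⊆ ball z₀ (σ * R₀) →
          ENNReal.ofReal (b * r ^ Q) ≤ μ (ball x r)) →
        ∀ (u : X → Y) (g : X → ℝ), Measurable u → Measurable g → (∀ x, 0 ≤ g x) →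
        IntegrableOn (fun x => g x ^ p) (ball z₀ (σ * R₀)) μ →
        (∃ N₀ : Set X, μ N₀ = 0 ∧ ∀ x, x ∉ N₀ → ∀ y, y ∉ N₀ →
          x ∈ ball z₀ (σ * R₀) → y ∈ ball z₀ (σ * R₀) →
          dist (u x) (u y) ≤ dist x y ^ s * (g x + g y)) →
        ∃ N : Set X, μ N = 0 ∧ ∀ x ∈ ball z₀ R₀ \ N, ∀ y ∈ ball z₀ R₀ \ N,
          dist (u x) (u y) ≤ C * b ^ (-(1 : ℝ) / p) * dist x y ^ (s - Q / p) *
            (∫ z in ball z₀ (σ * R₀), g z ^ p ∂μ) ^ (1 / p) := by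
  have hp0 : 0 < p := (div_pos hQ hs).trans hp
  have hα : Q / p < s := (div_lt_iff₀ hp0).2 (by rwa [div_lt_iff₀ hs, mul_comm] at hp)
  refine ⟨morreyConst s (Q / p) σ * 2 ^ (1 / p), by have := morreyConst_pos hα hσ; positivity, ?_⟩
  intro X _ _ _ μ Y _ _ _ z₀ R₀ b hR₀ hb hV u g _ _ hg0 hint ⟨N₀, hN₀, hgrad⟩
  refine ⟨N₀, hN₀, fun x hx y hy => ?_⟩
  set I := ∫ z in ball z₀ (σ * R₀), g z ^ p ∂μ
  have hB₀ : ball z₀ R₀ ⊆ ball z₀ (σ * R₀) := ball_subset_ball (by nlinarith)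
  have hdist : dist x y < 2 * R₀ := by
    linarith [dist_triangle_right x y z₀, mem_ball.1 hx.1, mem_ball.1 hy.1]
  have hgood : ∀ c ∈ ({x, y} : Set X), ∀ r, 0 < r → r ≤ (σ - 1) / 2 * dist x y →
      ∃ z ∈ ball c r ∩ (ball z₀ (σ * R₀) \ N₀), g z ≤ (2 * I / b) ^ (1 / p) * r ^ (-(Q / p)) := by
    intro c hc r hr hrd
    have hc₀ : dist c z₀ < R₀ := by rcases hc with rfl | rfl; exacts [hx.1, hy.1]
    have hrR : r ≤ (σ - 1) * R₀ := hrd.trans (by nlinarith)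
    have hsub : ball c r ⊆ ball z₀ (σ * R₀) := ball_subset_ball' (by linarith)
    exact exists_mem_le_mul_rpow_neg_of_ofReal_le_measure hp0 hb hr hg0 hint hsub
      (hV c r hr (by linarith) hsub) hN₀
  have hI : 0 ≤ I := setIntegral_nonneg measurableSet_ball fun z _ => Real.rpow_nonneg (hg0 z) p
  calc dist (u x) (u y)
      ≤ morreyConst s (Q / p) σ * (2 * I / b) ^ (1 / p) * dist x y ^ (s - Q / p) :=
        dist_le_morreyConst_mul (A := ball z₀ (σ * R₀) \ N₀) hs hα hσ hg0
          (fun x hx y hy => hgrad x hx.2 y hy.2 hx.1 hy.1) ⟨hB₀ hx.1, hx.2⟩ ⟨hB₀ hy.1, hy.2⟩ hgood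
    _ = _ := by
        rw [div_eq_mul_inv (2 * I), Real.mul_rpow (by positivity) (by positivity),
          Real.mul_rpow (by norm_num) hI, Real.inv_rpow hb.le, ← Real.rpow_neg hb.le, neg_div]
        ring
end

section
/- Let (X,d,μ) be a metric measure space, (Y,d_Y) a complete metric space, σ ∈ (1,∞), B₀ ⊆ X a ball of radius R₀, with μ satisfying the lower bound μ(B(x,r)) ≥ b r^Q whenever B(x,r) ⊆ σB₀ with r ≤ σR₀. If s,p ∈ (0,∞) with p > Q/s and u ∈ Ṁ^{s,p}(σB₀:Y), then u has a representative on B₀ that is Hölder continuous of order s − Q/p, with Hölder constant at most C b^{−1/p} ‖u‖_{Ṁ^{s,p}(σB₀:Y)} for C depending only on s,p,Q,σ. -/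
/-!
By Chebyshev's inequality and the lower mass bound, every ball `B(z, r) ⊆ σB₀` contains a point
`w` off the exceptional set with `g w ≤ ((∫ g ^ p) / b) ^ (1 / p) * r ^ (-Q / p)`. Joining `x` to
such points at the dyadic radii `δ d / 2 ^ n` (`d = dist x y`), the Hajłasz inequality makes the
steps decay like `2 ^ (-(s - Q / p) n)`, so the chain sums to
`C ((∫ g ^ p) / b) ^ (1 / p) d ^ (s - Q / p)`, and the same holds between the chains started at
`x` and at `y`. Balls have positive mass, so the points off the exceptional set are dense in `B₀`;
by completeness of `Y`, `u` extends from them Hölder continuously, and the bound, valid for every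
admissible `g`, passes to the seminorm.
-/

open Metric Set MeasureTheory

/-- The homogeneous fractional Hajłasz–Sobolev seminorm `‖u‖_{Ṁ^{s,p}(B:Y)}`: the infimum of
`‖g‖_{L^p(B)}` over all `s`-gradients `g` of `u` on `B`. -/
noncomputable def hajlaszSeminorm {X : Type*} [MetricSpace X] [MeasurableSpace X]
    {Y : Type*} [MetricSpace Y] (μ : Measure X) (B : Set X) (s p : ℝ) (u : X → Y) : ℝ :=
  sInf {t : ℝ | ∃ g : X → ℝ, Measurable g ∧ (∀ x, 0 ≤ g x) ∧
    IntegrableOn (fun x => g x ^ p) B μ ∧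
    (∃ N : Set X, μ N = 0 ∧ ∀ x, x ∉ N → ∀ y, y ∉ N → x ∈ B → y ∈ B →
      dist (u x) (u y) ≤ dist x y ^ s * (g x + g y)) ∧
    t = (∫ x in B, g x ^ p ∂μ) ^ (1 / p)}

open Filter Topology

section Measure

variable {X : Type*} [MeasurableSpace X] {μ : Measure X}

theorem exists_mem_diff_le_of_ofReal_integral_le {S A N : Set X} {f : X → ℝ} {t : ℝ}
    (hA : MeasurableSet A) (hAS : A ⊆ S) (hμA : μ A ≠ 0) (hN : μ N = 0)
    (hf : IntegrableOn f S μ) (hf0 : ∀ x, 0 ≤ f x) (ht : 0 ≤ t)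
    (h : ENNReal.ofReal (∫ x in S, f x ∂μ) ≤ ENNReal.ofReal t * μ A) :
    ∃ w ∈ A \ N, f w ≤ t := by
  by_contra! hlt
  have hlintegral : ∫⁻ x in S, ENNReal.ofReal (f x) ∂μ = ENNReal.ofReal (∫ x in S, f x ∂μ) :=
    (ofReal_integral_eq_lintegral_ofReal hf (ae_of_all _ hf0)).symm
  have hlt_ae : ∀ᵐ x ∂μ.restrict A, ENNReal.ofReal t < ENNReal.ofReal (f x) := by
    filter_upwards [ae_restrict_mem hA, ae_restrict_of_ae (measure_eq_zero_iff_ae_notMem.mp hN)]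
      with x hxA hxN
    have := hlt x ⟨hxA, hxN⟩
    exact (ENNReal.ofReal_lt_ofReal_iff (ht.trans_lt this)).mpr this
  have hmono : ∫⁻ x in A, ENNReal.ofReal (f x) ∂μ ≤ ENNReal.ofReal (∫ x in S, f x ∂μ) :=
    hlintegral ▸ lintegral_mono_set hAS
  have hconst : ∫⁻ _ in A, ENNReal.ofReal t ∂μ = ENNReal.ofReal t * μ A := setLIntegral_const _ _
  -- Strictness is what covers the degenerate case `∫ f = 0`.
  have hstrict : ∫⁻ _ in A, ENNReal.ofReal t ∂μ < ∫⁻ x in A, ENNReal.ofReal (f x) ∂μ := by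
    refine lintegral_strict_mono (by simpa using hμA) ?_ ?_ hlt_ae
    · exact ((hf.mono_set hAS).aemeasurable).ennreal_ofReal
    · refine ne_top_of_le_ne_top ENNReal.ofReal_ne_top ((lintegral_mono_ae ?_).trans hmono)
      exact hlt_ae.mono fun x hx => hx.le
  exact (hstrict.trans_le hmono).not_ge (hconst ▸ h)

end Measure

theorem exists_mem_ball_diff_le_of_measure_ball_ge {X : Type*} [PseudoMetricSpace X]
    [MeasurableSpace X] [OpensMeasurableSpace X] {μ : Measure X} {S N : Set X} {g : X → ℝ}
    {p Q b : ℝ} (hp : 0 < p) (hb : 0 < b) (hg0 : ∀ x, 0 ≤ g x)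
    (hgi : IntegrableOn (fun x => g x ^ p) S μ) (hN : μ N = 0) {z : X} {r : ℝ} (hr : 0 < r)
    (hzr : ball z r ⊆ S) (hμ : ENNReal.ofReal (b * r ^ Q) ≤ μ (ball z r)) :
    ∃ w ∈ S \ N, dist w z < r ∧
      g w ≤ ((∫ x in S, g x ^ p ∂μ) / b) ^ (1 / p) * r ^ (-(Q / p)) := by
  set E := ∫ x in S, g x ^ p ∂μ
  have hE : 0 ≤ E := integral_nonneg fun x => Real.rpow_nonneg (hg0 x) p
  set t := (E / b) ^ (1 / p) * r ^ (-(Q / p))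
  have ht : 0 ≤ t := by positivity
  have htp : t ^ p * (b * r ^ Q) = E := by
    rw [Real.mul_rpow (by positivity) (by positivity), ← Real.rpow_mul (by positivity),
      ← Real.rpow_mul hr.le, one_div_mul_cancel hp.ne', Real.rpow_one,
      neg_mul, div_mul_cancel₀ _ hp.ne', Real.rpow_neg hr.le]
    field_simp
  have hμ0 : μ (ball z r) ≠ 0 :=
    (lt_of_lt_of_le (ENNReal.ofReal_pos.mpr (by positivity)) hμ).ne'
  have hEμ : ENNReal.ofReal E ≤ ENNReal.ofReal (t ^ p) * μ (ball z r) := by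
    rw [← htp, ENNReal.ofReal_mul (by positivity)]
    gcongr
  obtain ⟨w, hw, hwt⟩ := exists_mem_diff_le_of_ofReal_integral_le measurableSet_ball hzr hμ0 hN
    hgi (fun x => Real.rpow_nonneg (hg0 x) p) (Real.rpow_nonneg ht p) hEμ
  exact ⟨w, ⟨hzr hw.1, hw.2⟩, mem_ball.mp hw.1, (Real.rpow_le_rpow_iff (hg0 w) ht hp).mp hwt⟩

theorem div_two_pow_rpow {r : ℝ} (hr : 0 ≤ r) (a : ℝ) (n : ℕ) :
    (r / 2 ^ n) ^ a = r ^ a * ((2 ^ a)⁻¹) ^ n := by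
  rw [Real.div_rpow hr (by positivity), ← Real.rpow_natCast, ← Real.rpow_mul (by norm_num),
    mul_comm, Real.rpow_mul (by norm_num), Real.rpow_natCast, div_eq_mul_inv, inv_pow]

-- Two dyadic chains, one from each endpoint, plus the step joining their starting points.
noncomputable def chainConst (s β δ : ℝ) : ℝ :=
  2 * (2 ^ s * (1 + 2 ^ β) * δ ^ (s - β) / (1 - (2 ^ (s - β))⁻¹)) +
    2 * (1 + 2 * δ) ^ s * δ ^ (-β)

theorem chainConst_pos {s β δ : ℝ} (hβs : β < s) (hδ : 0 < δ) : 0 < chainConst s β δ := by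
  have hq : 0 < 1 - ((2 : ℝ) ^ (s - β))⁻¹ :=
    sub_pos.mpr (inv_lt_one_of_one_lt₀ (Real.one_lt_rpow (by norm_num) (by linarith)))
  unfold chainConst
  positivity

section Chain

variable {X Y : Type*} [PseudoMetricSpace X] [PseudoMetricSpace Y] {u : X → Y} {g : X → ℝ}
  {G : Set X} {s β c : ℝ}

theorem dist_le_of_dyadic_approx
    (hu : ∀ x ∈ G, ∀ y ∈ G, dist (u x) (u y) ≤ dist x y ^ s * (g x + g y))
    (hg0 : ∀ x, 0 ≤ g x) (hs : 0 < s) (hβs : β < s) {z : X} (hz : z ∈ G) {r : ℝ} (hr : 0 < r)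
    {w : ℕ → X} (hwG : ∀ n, w n ∈ G) (hwz : ∀ n, dist (w n) z < r / 2 ^ n)
    (hgw : ∀ n, g (w n) ≤ c * (r / 2 ^ n) ^ (-β)) :
    dist (u (w 0)) (u z) ≤ 2 ^ s * (1 + 2 ^ β) * c * r ^ (s - β) / (1 - (2 ^ (s - β))⁻¹) := by
  set q : ℝ := (2 ^ (s - β))⁻¹
  have hq : q < 1 := inv_lt_one_of_one_lt₀ (Real.one_lt_rpow (by norm_num) (by linarith))
  have hrn : ∀ n, 0 < r / 2 ^ n := fun n => by positivity
  have hscale : ∀ n, (r / 2 ^ n) ^ s * (r / 2 ^ n) ^ (-β) = r ^ (s - β) * q ^ n := fun n => by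
    rw [← Real.rpow_add (hrn n), ← sub_eq_add_neg, div_two_pow_rpow hr.le]
  have hstep : ∀ n, dist (u (w n)) (u (w (n + 1))) ≤
      2 ^ s * (1 + 2 ^ β) * c * r ^ (s - β) * q ^ n := by
    intro n
    have hd : dist (w n) (w (n + 1)) ≤ 2 * (r / 2 ^ n) := by
      have hmono : r / 2 ^ (n + 1) ≤ r / 2 ^ n :=
        div_le_div_of_nonneg_left hr.le (by positivity) (pow_le_pow_right₀ (by norm_num) n.le_succ)
      linarith [dist_triangle_right (w n) (w (n + 1)) z, hwz n, hwz (n + 1)]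
    have hnext : (r / 2 ^ (n + 1)) ^ (-β) = 2 ^ β * (r / 2 ^ n) ^ (-β) := by
      rw [pow_succ, ← div_div, Real.div_rpow (hrn n).le zero_le_two, div_eq_mul_inv,
        ← Real.rpow_neg zero_le_two, neg_neg, mul_comm]
    calc dist (u (w n)) (u (w (n + 1)))
        ≤ dist (w n) (w (n + 1)) ^ s * (g (w n) + g (w (n + 1))) := hu _ (hwG n) _ (hwG (n + 1))
      _ ≤ (2 * (r / 2 ^ n)) ^ s * (c * (r / 2 ^ n) ^ (-β) + c * (r / 2 ^ (n + 1)) ^ (-β)) := by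
        gcongr
        · exact add_nonneg (hg0 _) (hg0 _)
        · exact hgw n
        · exact hgw (n + 1)
      _ = _ := by
        rw [hnext, Real.mul_rpow (by norm_num) (hrn n).le]
        linear_combination (2 ^ s * (1 + 2 ^ β) * c) * hscale n
  have htendsto : Tendsto (fun n => u (w n)) atTop (𝓝 (u z)) := by
    rw [tendsto_iff_dist_tendsto_zero]
    have hbound : ∀ n, dist (u (w n)) (u z) ≤
        c * r ^ (s - β) * q ^ n + g z * r ^ s * ((2 ^ s)⁻¹) ^ n := fun n => by
      calc dist (u (w n)) (u z) ≤ dist (w n) z ^ s * (g (w n) + g z) := hu _ (hwG n) _ hz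
        _ ≤ (r / 2 ^ n) ^ s * (c * (r / 2 ^ n) ^ (-β) + g z) := by
          gcongr
          · exact add_nonneg (hg0 _) (hg0 _)
          · exact (hwz n).le
          · exact hgw n
        _ = _ := by
          rw [mul_add, ← mul_assoc, mul_comm _ c, mul_assoc, hscale, div_two_pow_rpow hr.le]
          ring
    refine squeeze_zero (fun n => dist_nonneg) hbound ?_
    have hgeom_s : Tendsto (fun n : ℕ => ((2 : ℝ) ^ s)⁻¹ ^ n) atTop (𝓝 0) :=
      tendsto_pow_atTop_nhds_zero_of_lt_one (by positivity)
        (inv_lt_one_of_one_lt₀ (Real.one_lt_rpow (by norm_num) hs))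
    simpa only [mul_zero, add_zero] using
      ((tendsto_pow_atTop_nhds_zero_of_lt_one (by positivity) hq).const_mul (c * r ^ (s - β))).add
        (hgeom_s.const_mul (g z * r ^ s))
  exact dist_le_of_le_geometric_of_tendsto₀ q _ hq hstep htendsto

theorem dist_le_chainConst_mul
    (hu : ∀ x ∈ G, ∀ y ∈ G, dist (u x) (u y) ≤ dist x y ^ s * (g x + g y))
    (hg0 : ∀ x, 0 ≤ g x) (hs : 0 < s) (hβs : β < s) {B : Set X} {ρ δ : ℝ} (hδ : 0 < δ)
    (hgood : ∀ z ∈ B, ∀ r, 0 < r → r ≤ ρ → ∃ w ∈ G, dist w z < r ∧ g w ≤ c * r ^ (-β))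
    {x y : X} (hxB : x ∈ B) (hx : x ∈ G) (hyB : y ∈ B) (hy : y ∈ G)
    (hxy : δ * dist x y ≤ ρ) :
    dist (u x) (u y) ≤ chainConst s β δ * c * dist x y ^ (s - β) := by
  rcases (dist_nonneg (x := x) (y := y)).eq_or_lt with hd | hd
  · have := hu x hx y hy
    rw [← hd, Real.zero_rpow hs.ne', zero_mul] at this
    rwa [← hd, Real.zero_rpow (sub_pos.mpr hβs).ne', mul_zero]
  set d := dist x y
  set r := δ * d
  have hr : 0 < r := by positivity
  have hdyadic : ∀ z ∈ B, ∃ w : ℕ → X, ∀ n,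
      w n ∈ G ∧ dist (w n) z < r / 2 ^ n ∧ g (w n) ≤ c * (r / 2 ^ n) ^ (-β) := by
    intro z hz
    choose w hwG hw using fun n : ℕ => hgood z hz (r / 2 ^ n) (by positivity)
      ((div_le_self hr.le (one_le_pow₀ one_le_two)).trans hxy)
    exact ⟨w, fun n => ⟨hwG n, hw n⟩⟩
  obtain ⟨wx, hwx⟩ := hdyadic x hxB
  obtain ⟨wy, hwy⟩ := hdyadic y hyB
  have hx_end := dist_le_of_dyadic_approx hu hg0 hs hβs hx hr
    (fun n => (hwx n).1) (fun n => (hwx n).2.1) (fun n => (hwx n).2.2)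
  have hy_end := dist_le_of_dyadic_approx hu hg0 hs hβs hy hr
    (fun n => (hwy n).1) (fun n => (hwy n).2.1) (fun n => (hwy n).2.2)
  obtain ⟨hx0G, hx0, hgx0⟩ := hwx 0
  obtain ⟨hy0G, hy0, hgy0⟩ := hwy 0
  simp only [pow_zero, div_one] at hx0 hgx0 hy0 hgy0 hx_end hy_end
  have hmid : dist (u (wx 0)) (u (wy 0)) ≤ 2 * (1 + 2 * δ) ^ s * δ ^ (-β) * c * d ^ (s - β) := by
    have hw0 : dist (wx 0) (wy 0) ≤ (1 + 2 * δ) * d := by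
      linarith [dist_triangle4 (wx 0) x y (wy 0), hx0, hy0, dist_comm y (wy 0)]
    calc dist (u (wx 0)) (u (wy 0)) ≤ dist (wx 0) (wy 0) ^ s * (g (wx 0) + g (wy 0)) :=
          hu _ hx0G _ hy0G
      _ ≤ ((1 + 2 * δ) * d) ^ s * (c * r ^ (-β) + c * r ^ (-β)) := by
        gcongr
        exact add_nonneg (hg0 _) (hg0 _)
      _ = _ := by
        rw [Real.mul_rpow (by positivity) hd.le, Real.mul_rpow hδ.le hd.le, sub_eq_add_neg,
          Real.rpow_add hd]
        ring
  calc dist (u x) (u y) ≤ dist (u x) (u (wx 0)) + dist (u (wx 0)) (u (wy 0)) +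
        dist (u (wy 0)) (u y) := dist_triangle4 _ _ _ _
    _ ≤ chainConst s β δ * c * d ^ (s - β) := by
      have hend : 2 ^ s * (1 + 2 ^ β) * c * r ^ (s - β) / (1 - (2 ^ (s - β))⁻¹) =
          2 ^ s * (1 + 2 ^ β) * δ ^ (s - β) / (1 - (2 ^ (s - β))⁻¹) * c * d ^ (s - β) := by
        rw [Real.mul_rpow hδ.le hd.le]
        ring
      rw [dist_comm] at hx_end
      unfold chainConst
      linarith

end Chain

section Ball

variable {X : Type*} [PseudoMetricSpace X] {z₀ z : X} {R σ r : ℝ}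

theorem ball_subset_ball_mul_of_mem_ball (hz : z ∈ ball z₀ R) (hr : r ≤ (σ - 1) * R) :
    ball z r ⊆ ball z₀ (σ * R) :=
  ball_subset_ball' (by rw [mem_ball] at hz; linarith)

theorem mem_ball_mul_of_mem_ball (hσ : 1 ≤ σ) (hz : z ∈ ball z₀ R) : z ∈ ball z₀ (σ * R) := by
  rw [mem_ball] at hz ⊢
  nlinarith [dist_nonneg (x := z) (y := z₀)]

end Ball

theorem measure_ball_ne_zero_of_lower_bound {X : Type*} [PseudoMetricSpace X]
    [MeasurableSpace X] {μ : Measure X} {z₀ : X} {R₀ σ b Q : ℝ} (hσ : 1 < σ) (hb : 0 < b)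
    (hV : ∀ (x : X) (r : ℝ), 0 < r → r ≤ σ * R₀ → ball x r ⊆ ball z₀ (σ * R₀) →
      ENNReal.ofReal (b * r ^ Q) ≤ μ (ball x r))
    {x : X} (hx : x ∈ ball z₀ R₀) {r : ℝ} (hr : 0 < r) : μ (ball x r) ≠ 0 := by
  have hR₀ : 0 < R₀ := pos_of_mem_ball hx
  set r' := min r ((σ - 1) * R₀)
  have hr' : 0 < r' := lt_min hr (by nlinarith)
  have hbound := hV x r' hr' ((min_le_right _ _).trans (by nlinarith))
    (ball_subset_ball_mul_of_mem_ball hx (min_le_right _ _))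
  exact ((ENNReal.ofReal_pos.mpr (by positivity)).trans_le
    (hbound.trans (measure_mono (ball_subset_ball (min_le_left _ _))))).ne'

theorem dist_le_of_hajlasz {X Y : Type*} [PseudoMetricSpace X] [MeasurableSpace X]
    [OpensMeasurableSpace X] [PseudoMetricSpace Y] {μ : Measure X} {u : X → Y} {g : X → ℝ}
    {N : Set X} {z₀ : X} {R₀ σ b s p Q : ℝ} (hs : 0 < s) (hp : 0 < p) (hQs : Q / p < s)
    (hσ : 1 < σ) (hb : 0 < b)
    (hV : ∀ (x : X) (r : ℝ), 0 < r → r ≤ σ * R₀ → ball x r ⊆ ball z₀ (σ * R₀) →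
      ENNReal.ofReal (b * r ^ Q) ≤ μ (ball x r))
    (hg0 : ∀ x, 0 ≤ g x) (hgi : IntegrableOn (fun x => g x ^ p) (ball z₀ (σ * R₀)) μ)
    (hN : μ N = 0)
    (hu : ∀ x, x ∉ N → ∀ y, y ∉ N → x ∈ ball z₀ (σ * R₀) → y ∈ ball z₀ (σ * R₀) →
      dist (u x) (u y) ≤ dist x y ^ s * (g x + g y))
    {x y : X} (hx : x ∈ ball z₀ R₀ \ N) (hy : y ∈ ball z₀ R₀ \ N) :
    dist (u x) (u y) ≤ chainConst s (Q / p) ((σ - 1) / 2) *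
      ((∫ z in ball z₀ (σ * R₀), g z ^ p ∂μ) / b) ^ (1 / p) * dist x y ^ (s - Q / p) := by
  have hgood : ∀ z ∈ ball z₀ R₀, ∀ r, 0 < r → r ≤ (σ - 1) * R₀ →
      ∃ w ∈ ball z₀ (σ * R₀) \ N, dist w z < r ∧
        g w ≤ ((∫ z in ball z₀ (σ * R₀), g z ^ p ∂μ) / b) ^ (1 / p) * r ^ (-(Q / p)) := by
    intro z hz r hr hrR
    have hR₀ : 0 < R₀ := pos_of_mem_ball hz
    have hball := ball_subset_ball_mul_of_mem_ball hz hrR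
    exact exists_mem_ball_diff_le_of_measure_ball_ge hp hb hg0 hgi hN hr hball
      (hV z r hr (by nlinarith) hball)
  have hxy : (σ - 1) / 2 * dist x y ≤ (σ - 1) * R₀ := by
    have := dist_triangle_right x y z₀
    rw [Set.mem_sdiff, mem_ball] at hx hy
    nlinarith
  exact dist_le_chainConst_mul (fun a ha b hb => hu a ha.2 b hb.2 ha.1 hb.1) hg0 hs hQs
    (by linarith) hgood hx.1 ⟨mem_ball_mul_of_mem_ball hσ.le hx.1, hx.2⟩ hy.1
    ⟨mem_ball_mul_of_mem_ball hσ.le hy.1, hy.2⟩ hxy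

theorem subset_closure_diff_of_measure_ball_ne_zero {X : Type*} [PseudoMetricSpace X]
    [MeasurableSpace X] {μ : Measure X} {S N : Set X} (hS : IsOpen S) (hN : μ N = 0)
    (hμ : ∀ x ∈ S, ∀ r > 0, μ (ball x r) ≠ 0) : S ⊆ closure (S \ N) := by
  intro x hx
  rw [Metric.mem_closure_iff]
  intro ε hε
  obtain ⟨r, hr, hrS⟩ := Metric.isOpen_iff.mp hS x hx
  have hball : ¬ ball x (min ε r) ⊆ N := fun h =>
    hμ x hx _ (lt_min hε hr) (measure_mono_null h hN)
  obtain ⟨w, hw, hwN⟩ := not_subset.mp hball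
  refine ⟨w, ⟨hrS (ball_subset_ball (min_le_right _ _) hw), hwN⟩, ?_⟩
  rw [dist_comm]
  exact (mem_ball.mp hw).trans_le (min_le_left _ _)

theorem ball_subset_closure_ball_diff_of_lower_bound {X : Type*} [PseudoMetricSpace X]
    [MeasurableSpace X] {μ : Measure X} {N : Set X} {z₀ : X} {R₀ σ b Q : ℝ} (hσ : 1 < σ)
    (hb : 0 < b)
    (hV : ∀ (x : X) (r : ℝ), 0 < r → r ≤ σ * R₀ → ball x r ⊆ ball z₀ (σ * R₀) →
      ENNReal.ofReal (b * r ^ Q) ≤ μ (ball x r))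
    (hN : μ N = 0) : ball z₀ R₀ ⊆ closure (ball z₀ R₀ \ N) :=
  subset_closure_diff_of_measure_ball_ne_zero isOpen_ball hN
    fun _ hx _ hr => measure_ball_ne_zero_of_lower_bound hσ hb hV hx hr

section Extension

variable {X Y : Type*} [PseudoMetricSpace X] [PseudoMetricSpace Y] {f : X → Y} {D : Set X}
  {K α : ℝ}

theorem holderOnWith_of_dist_le (hK : 0 ≤ K) (hα : 0 ≤ α)
    (hf : ∀ x ∈ D, ∀ y ∈ D, dist (f x) (f y) ≤ K * dist x y ^ α) :
    HolderOnWith (Real.toNNReal K) (Real.toNNReal α) f D := by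
  intro x hx y hy
  rw [edist_dist, edist_dist, Real.coe_toNNReal _ hα,
    ENNReal.ofReal_rpow_of_nonneg dist_nonneg hα]
  exact (ENNReal.ofReal_le_ofReal (hf x hx y hy)).trans_eq (ENNReal.ofReal_mul hK)

theorem exists_tendsto_nhdsWithin_of_dist_le [CompleteSpace Y] [T2Space Y] {S : Set X} (hK : 0 ≤ K)
    (hα : 0 < α) (hDS : S ⊆ closure D)
    (hf : ∀ x ∈ D, ∀ y ∈ D, dist (f x) (f y) ≤ K * dist x y ^ α) :
    ∃ v : X → Y, (∀ x ∈ D, v x = f x) ∧ ∀ x ∈ S, Tendsto f (𝓝[D] x) (𝓝 (v x)) := by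
  have hH := holderOnWith_of_dist_le hK hα.le hf
  have hα' : 0 < Real.toNNReal α := Real.toNNReal_pos.mpr hα
  refine ⟨extendFrom D f, extendFrom_extends (hH.continuousOn hα'), fun x hx => ?_⟩
  have := mem_closure_iff_nhdsWithin_neBot.mp (hDS hx)
  exact tendsto_extendFrom (cauchy_map_iff_exists_tendsto.mp
    ((cauchy_nhds.mono nhdsWithin_le_nhds).map_of_le (hH.uniformContinuousOn hα') inf_le_right))

theorem dist_le_of_tendsto_nhdsWithin (hα : 0 ≤ α) {x y : X} {a b : Y}
    (hx : x ∈ closure D) (hy : y ∈ closure D)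
    (ha : Tendsto f (𝓝[D] x) (𝓝 a)) (hb : Tendsto f (𝓝[D] y) (𝓝 b))
    (hf : ∀ x ∈ D, ∀ y ∈ D, dist (f x) (f y) ≤ K * dist x y ^ α) :
    dist a b ≤ K * dist x y ^ α := by
  have := mem_closure_iff_nhdsWithin_neBot.mp hx
  have := mem_closure_iff_nhdsWithin_neBot.mp hy
  have hfst : Tendsto Prod.fst (𝓝[D] x ×ˢ 𝓝[D] y) (𝓝 x) :=
    tendsto_fst.mono_right nhdsWithin_le_nhds
  have hsnd : Tendsto Prod.snd (𝓝[D] x ×ˢ 𝓝[D] y) (𝓝 y) :=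
    tendsto_snd.mono_right nhdsWithin_le_nhds
  refine le_of_tendsto_of_tendsto ((ha.comp tendsto_fst).dist (hb.comp tendsto_snd))
    (((hfst.dist hsnd).rpow_const (Or.inr hα)).const_mul K) ?_
  filter_upwards [prod_mem_prod self_mem_nhdsWithin self_mem_nhdsWithin] with q hq
  exact hf _ hq.1 _ hq.2

end Extension

def IsHajlaszGradient {X Y : Type*} [PseudoMetricSpace X] [MeasurableSpace X]
    [PseudoMetricSpace Y] (μ : Measure X) (B : Set X) (s : ℝ) (u : X → Y) (g : X → ℝ) : Prop :=
  ∃ N : Set X, μ N = 0 ∧ ∀ x, x ∉ N → ∀ y, y ∉ N → x ∈ B → y ∈ B →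
    dist (u x) (u y) ≤ dist x y ^ s * (g x + g y)

theorem dist_le_of_tendsto_of_isHajlaszGradient {X Y : Type*} [PseudoMetricSpace X]
    [MeasurableSpace X] [OpensMeasurableSpace X] [PseudoMetricSpace Y] {μ : Measure X}
    {u v : X → Y} {g : X → ℝ} {N : Set X} {z₀ : X} {R₀ σ b s p Q : ℝ} (hs : 0 < s) (hp : 0 < p)
    (hQs : Q / p < s) (hσ : 1 < σ) (hb : 0 < b)
    (hV : ∀ (x : X) (r : ℝ), 0 < r → r ≤ σ * R₀ → ball x r ⊆ ball z₀ (σ * R₀) →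
      ENNReal.ofReal (b * r ^ Q) ≤ μ (ball x r))
    (hN : μ N = 0) (hv : ∀ x ∈ ball z₀ R₀, Tendsto u (𝓝[ball z₀ R₀ \ N] x) (𝓝 (v x)))
    (hg0 : ∀ x, 0 ≤ g x) (hgi : IntegrableOn (fun x => g x ^ p) (ball z₀ (σ * R₀)) μ)
    (hgrad : IsHajlaszGradient μ (ball z₀ (σ * R₀)) s u g)
    {x y : X} (hx : x ∈ ball z₀ R₀) (hy : y ∈ ball z₀ R₀) :
    dist (v x) (v y) ≤ chainConst s (Q / p) ((σ - 1) / 2) * b ^ (-(1 : ℝ) / p) *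
      dist x y ^ (s - Q / p) * (∫ z in ball z₀ (σ * R₀), g z ^ p ∂μ) ^ (1 / p) := by
  obtain ⟨N', hN', hu⟩ := hgrad
  -- `v` is the limit of `u` along the dense set `B₀ \ (N ∪ N')`, where `g` controls `u`.
  have hsub : ball z₀ R₀ \ (N ∪ N') ⊆ ball z₀ R₀ \ N := sdiff_subset_sdiff_right subset_union_left
  have hD := ball_subset_closure_ball_diff_of_lower_bound hσ hb hV (measure_union_null hN hN')
  have hbound := dist_le_of_tendsto_nhdsWithin (sub_pos.mpr hQs).le (hD hx) (hD hy)
    ((hv x hx).mono_left (nhdsWithin_mono _ hsub)) ((hv y hy).mono_left (nhdsWithin_mono _ hsub))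
    fun a ha a' ha' => dist_le_of_hajlasz hs hp hQs hσ hb hV hg0 hgi hN' hu
      ⟨ha.1, fun h => ha.2 (Or.inr h)⟩ ⟨ha'.1, fun h => ha'.2 (Or.inr h)⟩
  rw [Real.div_rpow (integral_nonneg fun x => Real.rpow_nonneg (hg0 x) p) hb.le] at hbound
  rw [neg_div, Real.rpow_neg hb.le]
  convert hbound using 1
  ring

theorem le_mul_hajlaszSeminorm {X Y : Type*} [MetricSpace X] [MeasurableSpace X] [MetricSpace Y]
    {μ : Measure X} {B : Set X} {s p : ℝ} {u : X → Y} {a K : ℝ} (hK : 0 ≤ K)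
    (hne : ∃ g : X → ℝ, Measurable g ∧ (∀ x, 0 ≤ g x) ∧
      IntegrableOn (fun x => g x ^ p) B μ ∧ IsHajlaszGradient μ B s u g)
    (h : ∀ g : X → ℝ, (∀ x, 0 ≤ g x) → IntegrableOn (fun x => g x ^ p) B μ →
      IsHajlaszGradient μ B s u g → a ≤ K * (∫ x in B, g x ^ p ∂μ) ^ (1 / p)) :
    a ≤ K * hajlaszSeminorm μ B s p u := by
  obtain ⟨g, hgm, hg0, hgi, hgrad⟩ := hne
  rcases hK.eq_or_lt with rfl | hK
  · simpa using h g hg0 hgi hgrad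
  rw [mul_comm, ← div_le_iff₀ hK]
  refine le_csInf ⟨_, g, hgm, hg0, hgi, hgrad, rfl⟩ ?_
  rintro t ⟨g', -, hg'0, hg'i, hgrad', rfl⟩
  rw [div_le_iff₀ hK, mul_comm]
  exact h g' hg'0 hg'i hgrad'

/-- Under the `V(σB₀,Q,b)` condition, with `p > Q/s` and `Y` complete, any
`u ∈ Ṁ^{s,p}(σB₀:Y)` has a representative on `B₀` that is Hölder continuous of order
`s − Q/p`, with Hölder constant at most `C b^{−1/p} ‖u‖_{Ṁ^{s,p}(σB₀:Y)}`, where `C`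
depends only on `s, p, Q, σ`. -/
theorem stmt8 (s p Q σ : ℝ) (hs : 0 < s) (hQ : 0 < Q) (hσ : 1 < σ) (hp : Q / s < p) :
    ∃ C : ℝ, 0 < C ∧
      ∀ (X : Type) (_ : MetricSpace X) (_ : MeasurableSpace X),
        ∀ (_ : OpensMeasurableSpace X) (μ : Measure X)
          (Y : Type) (_ : MetricSpace Y),
        ∀ (_ : CompleteSpace Y) (z₀ : X) (R₀ b : ℝ), 0 < R₀ → 0 < b →
        (∀ (x : X) (r : ℝ), 0 < r → r ≤ σ * R₀ → ball x r ⊆ ball z₀ (σ * R₀) →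
          ENNReal.ofReal (b * r ^ Q) ≤ μ (ball x r)) →
        ∀ u : X → Y,
        (∃ g : X → ℝ, Measurable g ∧ (∀ x, 0 ≤ g x) ∧
          IntegrableOn (fun x => g x ^ p) (ball z₀ (σ * R₀)) μ ∧
          ∃ N : Set X, μ N = 0 ∧ ∀ x, x ∉ N → ∀ y, y ∉ N →
            x ∈ ball z₀ (σ * R₀) → y ∈ ball z₀ (σ * R₀) →
            dist (u x) (u y) ≤ dist x y ^ s * (g x + g y)) →
        ∃ v : X → Y, (∀ᵐ x ∂(μ.restrict (ball z₀ R₀)), v x = u x) ∧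
          ∀ x ∈ ball z₀ R₀, ∀ y ∈ ball z₀ R₀,
            dist (v x) (v y) ≤ C * b ^ (-(1 : ℝ) / p) *
              hajlaszSeminorm μ (ball z₀ (σ * R₀)) s p u * dist x y ^ (s - Q / p) := by
  have hp0 : 0 < p := (div_pos hQ hs).trans hp
  have hQs : Q / p < s := by rwa [div_lt_iff₀ hp0, mul_comm, ← div_lt_iff₀ hs]
  have hC := chainConst_pos hQs (show 0 < (σ - 1) / 2 by linarith)
  refine ⟨_, hC, fun X _ _ _ μ Y _ _ z₀ R₀ b _ hb hV u hu_mem => ?_⟩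
  obtain ⟨g, hgm, hg0, hgi, N, hN, hu⟩ := hu_mem
  have hE : 0 ≤ ∫ z in ball z₀ (σ * R₀), g z ^ p ∂μ :=
    integral_nonneg fun x => Real.rpow_nonneg (hg0 x) p
  obtain ⟨v, hvu, hv⟩ := exists_tendsto_nhdsWithin_of_dist_le (by positivity) (sub_pos.mpr hQs)
    (ball_subset_closure_ball_diff_of_lower_bound hσ hb hV hN)
    fun x hx y hy => dist_le_of_hajlasz hs hp0 hQs hσ hb hV hg0 hgi hN hu hx hy
  refine ⟨v, ?_, fun x hx y hy => ?_⟩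
  · filter_upwards [ae_restrict_mem measurableSet_ball,
      ae_restrict_of_ae (measure_eq_zero_iff_ae_notMem.mp hN)] with x hxB hxN
    exact hvu x ⟨hxB, hxN⟩
  calc dist (v x) (v y) ≤ _ :=
      le_mul_hajlaszSeminorm (by positivity) ⟨g, hgm, hg0, hgi, N, hN, hu⟩ fun g' hg'0 hg'i hgrad =>
        dist_le_of_tendsto_of_isHajlaszGradient hs hp0 hQs hσ hb hV hN hv hg'0 hg'i hgrad hx hy
    _ = _ := by ring
end
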